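/- arXiv:2108.00739 — 2 statements merged into one kernel-verified Lean document; each statement's English description precedes it below -/
import Mathlib

section
/- Abstract interpretation soundness for bottom-up analysis: if U : A → A is monotone on a complete lattice A with concretisation γ : A → Set B monotone, and T_P ∘ γ ≤ γ ∘ U pointwise, then for all i, T_P^i(∅) ⊆ γ(U^i(⊥)), and consequently lfp(T_P) ⊆ γ(lfp(U)) when T_P is continuous. -/
def TP {B : Type*} (P : Set (Set B × B)) (I : Set B) : Set B :=
  { a | ∃ prem : Set B, (prem, a) ∈ P ∧ prem ⊆ I }

def TPhom {B : Type*} (P : Set (Set B × B)) : Set B →o Set B :=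
  ⟨TP P, by
    intro I J h a ha
    obtain ⟨prem, hmem, hsub⟩ := ha
    exact ⟨prem, hmem, hsub.trans h⟩⟩

theorem Monotone.iterate_bot_le_comp_iterate {α β : Type*} [Preorder α] [OrderBot α]
    {f : α → α} {g : β → β} {h : β → α} (hf : Monotone f) (H : f ∘ h ≤ h ∘ g) (n : ℕ) (b : β) :
    f^[n] ⊥ ≤ h (g^[n] b) :=
  (hf.iterate n bot_le).trans (hf.iterate_comp_le_of_le H n b)

theorem OrderHom.lfp_le_comp_lfp {α β : Type*} [CompleteLattice α] [CompleteLattice β]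
    (f : α →o α) (g : β →o β) {h : β → α} (H : f ∘ h ≤ h ∘ g) : lfp f ≤ h (lfp g) :=
  f.lfp_le <| (H _).trans_eq (congrArg h g.map_lfp)

theorem abstract_interpretation_sound_general {B : Type*} (P : Set (Set B × B))
    {A : Type*} [CompleteLattice A]
    (U : A →o A) (γ : A → Set B)
    (hsound : ∀ a : A, TP P (γ a) ⊆ γ (U a)) :
    (∀ i : ℕ, (TP P)^[i] ∅ ⊆ γ (U^[i] ⊥)) ∧
      OrderHom.lfp (TPhom P) ⊆ γ (OrderHom.lfp U) :=
  ⟨fun i => (TPhom P).monotone.iterate_bot_le_comp_iterate hsound i ⊥,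
    OrderHom.lfp_le_comp_lfp (TPhom P) U hsound⟩

/-- Soundness of abstract interpretation for bottom-up analysis: if `U` is a
monotone abstract operator on a complete lattice `A` with monotone
concretisation `γ`, and `TP ∘ γ ≤ γ ∘ U` pointwise, then every concrete
iterate is over-approximated by the corresponding abstract iterate, and
(for a finite-premise, hence continuous, `TP`) `lfp(TP) ⊆ γ(lfp(U))`. -/
theorem abstract_interpretation_sound {B : Type*} (P : Set (Set B × B))
    (hfin : ∀ r ∈ P, (Prod.fst r).Finite)
    {A : Type*} [CompleteLattice A]
    (U : A →o A) (γ : A → Set B) (hγ : Monotone γ)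
    (hsound : ∀ a : A, TP P (γ a) ⊆ γ (U a)) :
    (∀ i : ℕ, (TP P)^[i] ∅ ⊆ γ (U^[i] ⊥)) ∧
      OrderHom.lfp (TPhom P) ⊆ γ (OrderHom.lfp U) :=
  abstract_interpretation_sound_general P U γ hsound
end

section
/- Soundness of constraint strengthening with invariants: let P be a program over ground atoms and d ⊆ B a set such that lm(P) ⊆ { a | a ∉ Atoms_p } ∪ d. If P' is obtained from P by restricting each rule whose conclusion or some premise lies in Atoms_p to additionally require membership in d, then lm(P') = lm(P). -/
/-- The immediate consequence operator of the program strengthened with the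
invariant `d` on atoms of `Atoms_p`. -/
def TPstr {B : Type*} (P : Set (Set B × B)) (Atomsp d : Set B) (I : Set B) :
    Set B :=
  { a | ∃ prem : Set B, (prem, a) ∈ P ∧ prem ⊆ I ∧
        prem ∩ Atomsp ⊆ d ∧ (a ∈ Atomsp → a ∈ d) }

def TPstrHom {B : Type*} (P : Set (Set B × B)) (Atomsp d : Set B) :
    Set B →o Set B :=
  ⟨TPstr P Atomsp d, by
    intro I J h a ha
    obtain ⟨prem, hmem, hsub, hint, himp⟩ := ha
    exact ⟨prem, hmem, hsub.trans h, hint, himp⟩⟩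

/-- Soundness and completeness of constraint strengthening with invariants:
if every atom of `Atoms_p` in the least model satisfies `d`, then strengthening
the rules of `P` with `d` preserves the least model. -/
theorem strengthening_preserves_lfp {B : Type*} (P : Set (Set B × B))
    (Atomsp d : Set B)
    (hinv : ∀ a ∈ OrderHom.lfp (TPhom P), a ∈ Atomsp → a ∈ d) :
    OrderHom.lfp (TPstrHom P Atomsp d) = OrderHom.lfp (TPhom P) := by
  set M := OrderHom.lfp (TPhom P) with hM
  set K := OrderHom.lfp (TPstrHom P Atomsp d) with hK
  have hle : K ≤ M := by
    apply OrderHom.lfp_le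
    intro a ⟨prem, hmem, hsub, _, _⟩
    have : TPhom P M ≤ M := (OrderHom.map_lfp (TPhom P)).le
    exact this ⟨prem, hmem, hsub⟩
  apply le_antisymm hle
  apply OrderHom.lfp_le
  intro a ⟨prem, hmem, hsub⟩
  have haM : a ∈ M := by
    have : TPhom P M ≤ M := (OrderHom.map_lfp (TPhom P)).le
    exact this ⟨prem, hmem, hsub.trans hle⟩
  have hfix : TPstrHom P Atomsp d K ≤ K := (OrderHom.map_lfp _).le
  exact hfix ⟨prem, hmem, hsub, fun b ⟨hbK, hbA⟩ => hinv b (hle (hsub hbK)) hbA,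
    hinv a haM⟩
end
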